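/- There are exactly 32 quadruples (n, c, d, i) satisfying the Arieli–Avron–Zamansky non-deterministic truth tables whose induced logical equivalence relation satisfies, for all formulas A, B, the eight laws (1) A ∧ F ≡ F; (2) A ∨ T ≡ T; (3) A ∧ T ≡ A; (4) A ∨ F ≡ A; (5) A ∧ A ≡ A; (6) A ∨ A ≡ A; (7) A ∧ B ≡ B ∧ A; (8) A ∨ B ≡ B ∨ A (with T := ¬F). -/

import Mathlib

/-- The three truth values: true, false, both-true-and-false. -/
inductive TV : Type
  | t : TV
  | f : TV
  | b : TV
  deriving DecidableEq

/-- Formulas of LP^{→,F}: propositional variables, falsity constant,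
    negation, conjunction, disjunction, implication. -/
inductive Fm : Type
  | var : ℕ → Fm
  | fls : Fm
  | neg : Fm → Fm
  | conj : Fm → Fm → Fm
  | disj : Fm → Fm → Fm
  | impl : Fm → Fm → Fm
  deriving DecidableEq

/-- The LP^{→,F} negation truth function. -/
def TV.negLP : TV → TV
  | .t => .f
  | .f => .t
  | .b => .b

/-- The LP^{→,F} conjunction truth function. -/
def TV.andLP : TV → TV → TV
  | .f, _ => .f
  | _, .f => .f
  | .t, .t => .t
  | _, _ => .b

/-- The LP^{→,F} disjunction truth function. -/
def TV.orLP : TV → TV → TV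
  | .t, _ => .t
  | _, .t => .t
  | .f, .f => .f
  | _, _ => .b

/-- The LP^{→,F} implication truth function: t if the antecedent is f,
    otherwise the value of the consequent. -/
def TV.implLP : TV → TV → TV
  | .f, _ => .t
  | _, y => y

/-- A valuation for LP^{→,F}. -/
def IsValuation (ν : Fm → TV) : Prop :=
  ν .fls = .f ∧
  (∀ A, ν (.neg A) = (ν A).negLP) ∧
  (∀ A B, ν (.conj A B) = (ν A).andLP (ν B)) ∧
  (∀ A B, ν (.disj A B) = (ν A).orLP (ν B)) ∧
  (∀ A B, ν (.impl A B) = (ν A).implLP (ν B))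

/-- Logical equivalence in LP^{→,F}. -/
def LEquiv (A B : Fm) : Prop := ∀ ν : Fm → TV, IsValuation ν → ν A = ν B

/-- The truth constant T, an abbreviation for ¬F. -/
def Fm.tru : Fm := .neg .fls

/-- A truth value is designated iff it is t or ⊤. -/
def Designated (v : TV) : Prop := v = .t ∨ v = .b

/-- Semantic logical consequence in LP^{→,F}. -/
def LPCons (Γ : Set Fm) (A : Fm) : Prop :=
  ∀ ν : Fm → TV, IsValuation ν → ((∃ B ∈ Γ, ν B = .f) ∨ Designated (ν A))

/-- Validity in LP^{→,F}. -/
def LPValid (A : Fm) : Prop := ∀ ν : Fm → TV, IsValuation ν → Designated (ν A)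

/-- A quadruple of truth functions on the three truth values. -/
structure Quad : Type where
  n : TV → TV
  c : TV → TV → TV
  d : TV → TV → TV
  i : TV → TV → TV

/-- The Arieli–Avron–Zamansky non-deterministic truth tables. -/
def AAZ (q : Quad) : Prop :=
  q.n .t = .f ∧ q.n .f = .t ∧ (q.n .b = .t ∨ q.n .b = .b) ∧
  (∀ y, q.c .f y = .f) ∧ (∀ x, q.c x .f = .f) ∧ q.c .t .t = .t ∧
  (q.c .t .b = .t ∨ q.c .t .b = .b) ∧
  (q.c .b .t = .t ∨ q.c .b .t = .b) ∧
  (q.c .b .b = .t ∨ q.c .b .b = .b) ∧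
  q.d .f .f = .f ∧ q.d .t .t = .t ∧ q.d .t .f = .t ∧ q.d .f .t = .t ∧
  (q.d .t .b = .t ∨ q.d .t .b = .b) ∧
  (q.d .b .t = .t ∨ q.d .b .t = .b) ∧
  (q.d .b .b = .t ∨ q.d .b .b = .b) ∧
  (q.d .b .f = .t ∨ q.d .b .f = .b) ∧
  (q.d .f .b = .t ∨ q.d .f .b = .b) ∧
  q.i .t .f = .f ∧ q.i .b .f = .f ∧
  q.i .f .f = .t ∧ q.i .f .t = .t ∧ q.i .t .t = .t ∧
  (q.i .f .b = .t ∨ q.i .f .b = .b) ∧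
  (q.i .t .b = .t ∨ q.i .t .b = .b) ∧
  (q.i .b .t = .t ∨ q.i .b .t = .b) ∧
  (q.i .b .b = .t ∨ q.i .b .b = .b)

/-- A valuation for the logic induced by the quadruple `q`. -/
def IsValuationQ (q : Quad) (ν : Fm → TV) : Prop :=
  ν .fls = .f ∧
  (∀ A, ν (.neg A) = q.n (ν A)) ∧
  (∀ A B, ν (.conj A B) = q.c (ν A) (ν B)) ∧
  (∀ A B, ν (.disj A B) = q.d (ν A) (ν B)) ∧
  (∀ A B, ν (.impl A B) = q.i (ν A) (ν B))

/-- Logical equivalence in the logic induced by the quadruple `q`. -/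
def LEquivQ (q : Quad) (A B : Fm) : Prop :=
  ∀ ν : Fm → TV, IsValuationQ q ν → ν A = ν B

/-- The quadruple of LP^{→,F}. -/
def lpQuad : Quad := ⟨TV.negLP, TV.andLP, TV.orLP, TV.implLP⟩

/-- Laws (1)–(8) for the logic induced by a quadruple. -/
def Laws8 (q : Quad) : Prop :=
  ∀ A B : Fm,
    LEquivQ q (A.conj .fls) .fls ∧
    LEquivQ q (A.disj Fm.tru) Fm.tru ∧
    LEquivQ q (A.conj Fm.tru) A ∧
    LEquivQ q (A.disj .fls) A ∧
    LEquivQ q (A.conj A) A ∧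
    LEquivQ q (A.disj A) A ∧
    LEquivQ q (A.conj B) (B.conj A) ∧
    LEquivQ q (A.disj B) (B.disj A)

/-!
Reading the eight laws at valuations of two variables shows that, once `n(f) = t`, they say
exactly that `c` is commutative and idempotent with unit `t` and zero `f`, and `d` likewise with
unit `f` and zero `t`. These identities fill in every entry left open by the AAZ tables
(e.g. `c(⊤, t) = ⊤`, hence `c(t, ⊤) = ⊤`, and `c(⊤, ⊤) = ⊤`), so `c` and `d` must be the LP
conjunction and disjunction, while `n(⊤), i(f, ⊤), i(t, ⊤), i(⊤, t), i(⊤, ⊤)` range freely over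
the two designated values: `2 ^ 5` quadruples.
-/

instance : Fintype TV :=
  ⟨{.t, .f, .b}, by intro x; cases x <;> simp⟩

instance : DecidablePred Designated := fun v =>
  inferInstanceAs (Decidable (v = .t ∨ v = .b))

attribute [ext] Quad

theorem card_designated : Nat.card {v : TV // Designated v} = 2 := by
  rw [Nat.card_eq_fintype_card]
  decide

namespace Quad

def eval (q : Quad) (σ : ℕ → TV) : Fm → TV
  | .var k => σ k
  | .fls => .f
  | .neg A => q.n (q.eval σ A)
  | .conj A B => q.c (q.eval σ A) (q.eval σ B)
  | .disj A B => q.d (q.eval σ A) (q.eval σ B)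
  | .impl A B => q.i (q.eval σ A) (q.eval σ B)

theorem isValuationQ_eval (q : Quad) (σ : ℕ → TV) : IsValuationQ q (q.eval σ) :=
  ⟨rfl, fun _ => rfl, fun _ _ => rfl, fun _ _ => rfl, fun _ _ => rfl⟩

def ofFree (p : {v : TV // Designated v} × {v : TV // Designated v} × {v : TV // Designated v} ×
    {v : TV // Designated v} × {v : TV // Designated v}) : Quad where
  n
    | .t => .f
    | .f => .t
    | .b => p.1
  c := TV.andLP
  d := TV.orLP
  i
    | .t, .f => .f
    | .b, .f => .f
    | .f, .f => .t
    | .f, .t => .t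
    | .t, .t => .t
    | .f, .b => p.2.1
    | .t, .b => p.2.2.1
    | .b, .t => p.2.2.2.1
    | .b, .b => p.2.2.2.2

theorem ofFree_injective : Function.Injective ofFree := by
  rintro ⟨a, w, x, y, z⟩ ⟨a', w', x', y', z'⟩ h
  have hn := congrFun (congrArg Quad.n h) .b
  have hi := congrArg Quad.i h
  simp only [Prod.mk.injEq]
  exact ⟨Subtype.ext hn, Subtype.ext (congrFun (congrFun hi .f) .b),
    Subtype.ext (congrFun (congrFun hi .t) .b), Subtype.ext (congrFun (congrFun hi .b) .t),
    Subtype.ext (congrFun (congrFun hi .b) .b)⟩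

theorem mem_range_ofFree_iff {q : Quad} :
    q ∈ Set.range ofFree ↔ AAZ q ∧ q.c = TV.andLP ∧ q.d = TV.orLP := by
  constructor
  · rintro ⟨⟨⟨a, ha⟩, ⟨w, hw⟩, ⟨x, hx⟩, ⟨y, hy⟩, ⟨z, hz⟩⟩, rfl⟩
    refine ⟨⟨rfl, rfl, ha, fun v => by cases v <;> rfl, fun v => by cases v <;> rfl, rfl,
      .inr rfl, .inr rfl, .inr rfl, rfl, rfl, rfl, rfl, .inl rfl, .inl rfl, .inr rfl, .inr rfl,
      .inr rfl, rfl, rfl, rfl, rfl, rfl, hw, hx, hy, hz⟩, rfl, rfl⟩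
  · rintro ⟨hq, hc, hd⟩
    obtain ⟨hnt, hnf, hnb, -, -, -, -, -, -, -, -, -, -, -, -, -, -, -,
      hitf, hibf, hiff, hift, hitt, hifb, hitb, hibt, hibb⟩ := hq
    refine ⟨(⟨_, hnb⟩, ⟨_, hifb⟩, ⟨_, hitb⟩, ⟨_, hibt⟩, ⟨_, hibb⟩), Eq.symm ?_⟩
    ext x y
    · cases x <;> first | rfl | assumption
    · exact congrFun (congrFun hc x) y
    · exact congrFun (congrFun hd x) y
    · cases x <;> cases y <;> first | rfl | assumption

end Quad

theorem laws8_iff_truthTables (q : Quad) :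
    Laws8 q ↔ ∀ x y : TV,
      q.c x .f = .f ∧ q.d x (q.n .f) = q.n .f ∧ q.c x (q.n .f) = x ∧ q.d x .f = x ∧
      q.c x x = x ∧ q.d x x = x ∧ q.c x y = q.c y x ∧ q.d x y = q.d y x := by
  constructor
  · intro h x y
    have hν := q.isValuationQ_eval fun k => if k = 0 then x else y
    obtain ⟨h1, h2, h3, h4, h5, h6, h7, h8⟩ := h (.var 0) (.var 1)
    exact ⟨h1 _ hν, h2 _ hν, h3 _ hν, h4 _ hν, h5 _ hν, h6 _ hν, h7 _ hν, h8 _ hν⟩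
  · intro h A B
    refine ⟨?_, ?_, ?_, ?_, ?_, ?_, ?_, ?_⟩ <;> rintro ν ⟨h0, hn, hc, hd, -⟩ <;>
      obtain ⟨h1, h2, h3, h4, h5, h6, h7, h8⟩ := h (ν A) (ν B) <;>
      simp only [Fm.tru, h0, hn, hc, hd] <;> assumption

theorem laws8_iff {q : Quad} (hnf : q.n .f = .t) :
    Laws8 q ↔ q.c = TV.andLP ∧ q.d = TV.orLP := by
  rw [laws8_iff_truthTables, hnf]
  constructor
  · intro h
    constructor <;> funext x y <;>
      obtain ⟨hcf, hdt, hct, hdf, hcc, hdd, hc, hd⟩ := h x y <;>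
      obtain ⟨hcf', hdt', hct', hdf', -, -, -, -⟩ := h y x <;>
      cases x <;> cases y <;> dsimp only [TV.andLP, TV.orLP]
    all_goals first
      | assumption
      | rw [hc]; assumption
      | rw [hd]; assumption
  · rintro ⟨hc, hd⟩
    rw [hc, hd]
    decide

/-- Exactly 32 quadruples satisfying the AAZ non-deterministic truth tables
    induce a logical equivalence relation satisfying laws (1)–(8). -/
theorem thirtytwo_quads_laws_1_to_8 :
    {q : Quad | AAZ q ∧ Laws8 q}.ncard = 32 := by
  have hset : {q : Quad | AAZ q ∧ Laws8 q} = Set.range Quad.ofFree := by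
    ext q
    rw [Set.mem_ofPred_eq, Quad.mem_range_ofFree_iff]
    exact and_congr_right fun hq => laws8_iff hq.2.1
  rw [hset, Set.ncard_range_of_injective Quad.ofFree_injective]
  simp only [Nat.card_prod, card_designated]
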